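/- arXiv:2110.14235 — 2 statements merged into one kernel-verified Lean document; each statement's English description precedes it below -/
import Mathlib

section
/- Let Φ > 0 and let d, d' satisfy 0 ≤ d < Φ/2 < d'. Then the quadratic polynomial P(Y) = Y² + 2·(Φ/2)²·Y + (Φ/2)⁴ − d·d'·(Φ − d)·(Φ − d') has no positive real root; in particular P(Y) > 0 for all Y > 0. -/
theorem quadratic_no_pos_root (Φ d d' : ℝ) (hΦ : 0 < Φ) (hd : 0 ≤ d) (hd2 : d < Φ / 2)
    (hd' : Φ / 2 < d') :
    ∀ Y : ℝ, 0 < Y →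
      0 < Y ^ 2 + 2 * (Φ / 2) ^ 2 * Y + (Φ / 2) ^ 4 - d * d' * (Φ - d) * (Φ - d') := by
  intro Y hY
  have h1 : d * (Φ - d) ≤ (Φ / 2) ^ 2 := by nlinarith [sq_nonneg (d - Φ / 2)]
  have h2 : d' * (Φ - d') ≤ (Φ / 2) ^ 2 := by nlinarith [sq_nonneg (d' - Φ / 2)]
  have hkey : d * d' * (Φ - d) * (Φ - d') ≤ (Φ / 2) ^ 4 := by
    rcases le_or_gt (d' * (Φ - d')) 0 with h | h
    · nlinarith [mul_nonneg hd (by linarith : (0:ℝ) ≤ Φ - d), sq_nonneg (Φ/2)]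
    · nlinarith [mul_nonneg hd (by linarith : (0:ℝ) ≤ Φ - d), sq_nonneg (Φ/2)]
  nlinarith [sq_nonneg Y, mul_pos hY hY, sq_nonneg (Φ/2), mul_pos (mul_pos hΦ hΦ) hY]
end

section
/- Let Φ > 0 and 0 ≤ d < Φ/2 < d'. Define G(y) = (((Φ/2 − d)(Φ/2 − d') + y²)² + y²·(d' − d)²)/((Φ/2)² + y²) for y > 0. Then G is strictly increasing on (0, ∞). -/
theorem G_strict_mono (Φ d d' : ℝ) (hΦ : 0 < Φ) (hd : 0 ≤ d) (hd2 : d < Φ / 2)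
    (hd' : Φ / 2 < d') :
    StrictMonoOn (fun y : ℝ =>
        (((Φ / 2 - d) * (Φ / 2 - d') + y ^ 2) ^ 2 + y ^ 2 * (d' - d) ^ 2) /
          ((Φ / 2) ^ 2 + y ^ 2))
      (Set.Ioi 0) := by
  intro a ha b hb hab
  simp only [Set.mem_Ioi] at ha hb
  have hx : (0:ℝ) < (Φ/2)^2 + a^2 := by positivity
  have hx' : (0:ℝ) < (Φ/2)^2 + b^2 := by positivity
  have hd'0 : 0 < d' := lt_trans (by linarith) hd'
  -- key fact: (Φ/2)^4 - d*d'*(Φ-d)*(Φ-d') ≥ 0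
  have hp1 : 0 ≤ d * (Φ - d) := mul_nonneg hd (by linarith)
  have hp2 : d * (Φ - d) ≤ (Φ/2)^2 := by nlinarith [sq_nonneg (d - Φ/2)]
  have hq2 : d' * (Φ - d') ≤ (Φ/2)^2 := by nlinarith [sq_nonneg (d' - Φ/2)]
  have hK : 0 ≤ (Φ/2)^4 - (d * (Φ - d)) * (d' * (Φ - d')) := by
    nlinarith [mul_le_mul_of_nonneg_left hq2 hp1, sq_nonneg ((Φ/2)^2)]
  have h1 : 0 < b^2 - a^2 := by nlinarith
  have h2 : 0 < (Φ/2)^2 * (a^2 + b^2) + a^2 * b^2 := by positivity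
  show (((Φ / 2 - d) * (Φ / 2 - d') + a ^ 2) ^ 2 + a ^ 2 * (d' - d) ^ 2) /
          ((Φ / 2) ^ 2 + a ^ 2) <
        (((Φ / 2 - d) * (Φ / 2 - d') + b ^ 2) ^ 2 + b ^ 2 * (d' - d) ^ 2) /
          ((Φ / 2) ^ 2 + b ^ 2)
  rw [div_lt_div_iff₀ hx hx']
  nlinarith [mul_pos h1 h2, mul_nonneg (le_of_lt h1) hK]
end
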